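/- arXiv:1902.00947 — 3 statements merged into one kernel-verified Lean document; each statement's English description precedes it below -/
import Mathlib

section
/- For gradient descent x_{k+1} = x_k - (1/L) f'(x_k) on an L-smooth convex function f with minimizer x⋆, after N steps one has simultaneously f(x_N) - f(x⋆) ≤ L‖x_0 - x⋆‖²/(2N+1) and ‖f'(x_N)‖² ≤ L²‖x_0 - x⋆‖²/(N(N+2)). -/
/-!
Everything follows from the interpolation inequality of `L`-smooth convex functions,
`2L (f y + ⟪f' y, x - y⟫) + ‖f' x - f' y‖² ≤ 2L f x`, obtained by comparing the descent lemma
at `x` with the supporting hyperplane at `y`, both evaluated at `x - (f' x - f' y) / L`.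
Along a gradient step `y ↦ y⁺` it gives `‖f' y‖² + ‖f' y⁺‖² ≤ 2L (f y - f y⁺)`,
`‖f' y⁺‖ ≤ ‖f' y‖` and `2L (f y - f x⋆) ≤ L² (‖y - x⋆‖² - ‖y⁺ - x⋆‖²)`. Summed with weights
`k + 1`, `(k + 1)²` and `1` they show that
`Ψₖ = 2kL (f xₖ - f x⋆) + k(k+1) ‖f' xₖ‖² + L² ‖xₖ - x⋆‖²` is nonincreasing, and `Ψ₀ = L² ‖x₀ - x⋆‖²`.
The last inequality bounds `Ψ_N` below by `(2N+2) L (f x_N - f x⋆)`, and `‖f' x_N‖² ≤ 2L (f x_N - f x⋆)`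
bounds it below by `N(N+2) ‖f' x_N‖²`.
-/

open RealInnerProductSpace Set

section SmoothConvex

variable {E : Type*} [NormedAddCommGroup E] [InnerProductSpace ℝ E]

def SmoothConvexInterpolation (L : ℝ) (f : E → ℝ) (f' : E → E) : Prop :=
  ∀ x y, 2 * L * (f y + ⟪f' y, x - y⟫) + ‖f' x - f' y‖ ^ 2 ≤ 2 * L * f x

variable [CompleteSpace E] {f : E → ℝ} {f' : E → E} {L : ℝ}

theorem HasGradientAt.hasDerivAt_comp_add_smul {g x v : E} {t : ℝ}
    (h : HasGradientAt f g (x + t • v)) :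
    HasDerivAt (fun s : ℝ => f (x + s • v)) ⟪g, v⟫ t := by
  have hline : HasDerivAt (fun s : ℝ => x + s • v) v t := by
    simpa using ((hasDerivAt_id t).smul_const v).const_add x
  exact (h.hasFDerivAt.comp_hasDerivAt t hline).congr_deriv (by simp)

theorem ConvexOn.add_inner_sub_le (hf : ConvexOn ℝ univ f) {g x : E}
    (h : HasGradientAt f g x) (y : E) : f x + ⟪g, y - x⟫ ≤ f y := by
  have hline : ConvexOn ℝ univ (fun s : ℝ => f (x + s • (y - x))) := by
    have hcomp : f ∘ AffineMap.lineMap x y = fun s : ℝ => f (x + s • (y - x)) := by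
      ext s
      simp [AffineMap.lineMap_apply, add_comm]
    simpa [hcomp] using hf.comp_affineMap (AffineMap.lineMap x y)
  have hderiv : HasDerivAt (fun s : ℝ => f (x + s • (y - x))) ⟪g, y - x⟫ 0 :=
    HasGradientAt.hasDerivAt_comp_add_smul (by simpa using h)
  have hslope := hline.le_slope_of_hasDerivAt (mem_univ 0) (mem_univ 1) one_pos hderiv
  simp only [slope_def_field, one_smul, add_sub_cancel, zero_smul, add_zero, sub_zero,
    div_one] at hslope
  linarith

theorem le_add_inner_add_of_lipschitz_gradient (hgrad : ∀ z, HasGradientAt f (f' z) z)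
    (hsmooth : ∀ a b, ‖f' a - f' b‖ ≤ L * ‖a - b‖) (x y : E) :
    f y ≤ f x + ⟪f' x, y - x⟫ + L / 2 * ‖y - x‖ ^ 2 := by
  set v := y - x
  let ψ : ℝ → ℝ := fun s => f (x + s • v) - s * ⟪f' x, v⟫ - L / 2 * s ^ 2 * ‖v‖ ^ 2
  have hψ : ∀ s, HasDerivAt ψ (⟪f' (x + s • v), v⟫ - ⟪f' x, v⟫ - L * s * ‖v‖ ^ 2) s := by
    intro s
    have hpath : HasDerivAt (fun s : ℝ => f (x + s • v)) ⟪f' (x + s • v), v⟫ s :=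
      (hgrad _).hasDerivAt_comp_add_smul
    exact ((hpath.sub ((hasDerivAt_id s).mul_const ⟪f' x, v⟫)).sub
      (((hasDerivAt_pow 2 s).const_mul (L / 2)).mul_const (‖v‖ ^ 2))).congr_deriv
      (by push_cast; ring)
  have hψ' : ∀ s ∈ interior (Icc (0 : ℝ) 1),
      ⟪f' (x + s • v), v⟫ - ⟪f' x, v⟫ - L * s * ‖v‖ ^ 2 ≤ 0 := by
    intro s hs
    rw [interior_Icc] at hs
    calc ⟪f' (x + s • v), v⟫ - ⟪f' x, v⟫ - L * s * ‖v‖ ^ 2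
        = ⟪f' (x + s • v) - f' x, v⟫ - L * s * ‖v‖ ^ 2 := by rw [inner_sub_left]
      _ ≤ L * ‖x + s • v - x‖ * ‖v‖ - L * s * ‖v‖ ^ 2 := by
        gcongr
        exact (real_inner_le_norm _ _).trans (by gcongr; exact hsmooth _ _)
      _ = 0 := by
        rw [add_sub_cancel_left, norm_smul, Real.norm_of_nonneg hs.1.le]; ring
  have hanti : AntitoneOn ψ (Icc 0 1) :=
    antitoneOn_of_hasDerivWithinAt_nonpos (convex_Icc 0 1)
      (fun s _ => (hψ s).continuousAt.continuousWithinAt)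
      (fun s _ => (hψ s).hasDerivWithinAt) hψ'
  have h01 : ψ 1 ≤ ψ 0 :=
    hanti (left_mem_Icc.2 zero_le_one) (right_mem_Icc.2 zero_le_one) zero_le_one
  have hψ0 : ψ 0 = f x := by simp [ψ]
  have hψ1 : ψ 1 = f y - ⟪f' x, v⟫ - L / 2 * ‖v‖ ^ 2 := by simp [ψ, v]
  linarith

theorem ConvexOn.smoothConvexInterpolation (hL : 0 < L)
    (hgrad : ∀ z, HasGradientAt f (f' z) z) (hconv : ConvexOn ℝ univ f)
    (hsmooth : ∀ a b, ‖f' a - f' b‖ ≤ L * ‖a - b‖) : SmoothConvexInterpolation L f f' := by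
  intro x y
  set u := f' x - f' y
  set z := x - (1 / L) • u
  have hdescent := le_add_inner_add_of_lipschitz_gradient hgrad hsmooth x z
  have hsupport := hconv.add_inner_sub_le (hgrad y) z
  have hzx : L • (z - x) = -u := by simp [z, smul_smul, hL.ne']
  have hzy : L • (z - y) = L • (x - y) - u := by
    simp [z, smul_sub, smul_smul, hL.ne']; abel
  have e1 : L * ⟪f' x, z - x⟫ = -⟪f' x, u⟫ := by
    rw [← real_inner_smul_right, hzx, inner_neg_right]
  have e2 : L ^ 2 * ‖z - x‖ ^ 2 = ‖u‖ ^ 2 := by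
    rw [← norm_neg u, ← hzx, norm_smul, mul_pow, Real.norm_eq_abs, sq_abs]
  have e3 : L * ⟪f' y, z - y⟫ = L * ⟪f' y, x - y⟫ - ⟪f' y, u⟫ := by
    rw [← real_inner_smul_right, hzy, inner_sub_right, real_inner_smul_right]
  have e4 : ⟪f' x, u⟫ - ⟪f' y, u⟫ = ‖u‖ ^ 2 := by
    rw [← inner_sub_left, real_inner_self_eq_norm_sq]
  linear_combination 2 * L * hdescent + 2 * L * hsupport + 2 * e1 + e2 - 2 * e3 - 2 * e4

end SmoothConvex

section GradientDescent

variable {E : Type*} [NormedAddCommGroup E] [InnerProductSpace ℝ E] {f : E → ℝ} {f' : E → E}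
  {L : ℝ}

noncomputable def gradientStep (L : ℝ) (f' : E → E) (y : E) : E := y - (1 / L) • f' y

theorem smul_sub_gradientStep (hL : L ≠ 0) (y : E) : L • (y - gradientStep L f' y) = f' y := by
  simp [gradientStep, smul_smul, hL]

theorem sq_norm_add_sq_norm_gradientStep_le (hL : L ≠ 0)
    (hf : SmoothConvexInterpolation L f f') (y : E) :
    ‖f' y‖ ^ 2 + ‖f' (gradientStep L f' y)‖ ^ 2 ≤ 2 * L * (f y - f (gradientStep L f' y)) := by
  have h := hf y (gradientStep L f' y)
  have hinner : L * ⟪f' (gradientStep L f' y), y - gradientStep L f' y⟫ =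
      ⟪f' y, f' (gradientStep L f' y)⟫ := by
    rw [← real_inner_smul_right, smul_sub_gradientStep hL, real_inner_comm]
  rw [norm_sub_sq_real] at h
  linear_combination h - 2 * hinner

theorem sq_norm_gradientStep_le (hL : L ≠ 0)
    (hf : SmoothConvexInterpolation L f f') (y : E) :
    ‖f' (gradientStep L f' y)‖ ^ 2 ≤ ‖f' y‖ ^ 2 := by
  set y' := gradientStep L f' y
  -- Adding the two interpolation inequalities (cocoercivity) gives `‖f' y'‖² ≤ ⟪f' y, f' y'⟫`.
  have h₁ := hf y y'
  have h₂ := hf y' y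
  have hinner₁ : L * ⟪f' y', y - y'⟫ = ⟪f' y, f' y'⟫ := by
    rw [← real_inner_smul_right, smul_sub_gradientStep hL, real_inner_comm]
  have hinner₂ : L * ⟪f' y, y' - y⟫ = -‖f' y‖ ^ 2 := by
    rw [← neg_sub, inner_neg_right, mul_neg, ← real_inner_smul_right, smul_sub_gradientStep hL,
      real_inner_self_eq_norm_sq]
  have hsq : 0 ≤ ‖f' y - f' y'‖ ^ 2 := sq_nonneg _
  rw [norm_sub_sq_real] at h₁ h₂ hsq
  rw [real_inner_comm (f' y)] at h₂
  linarith

theorem two_mul_sub_add_sq_dist_gradientStep_le (hL : L ≠ 0)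
    (hf : SmoothConvexInterpolation L f f') {z : E} (hz : f' z = 0) (y : E) :
    2 * L * (f y - f z) + L ^ 2 * ‖gradientStep L f' y - z‖ ^ 2 ≤ L ^ 2 * ‖y - z‖ ^ 2 := by
  have h := hf z y
  have hdist : L • (gradientStep L f' y - z) = L • (y - z) - f' y := by
    rw [← smul_sub_gradientStep (f' := f') hL y, ← smul_sub]; abel_nf
  have hsq : L ^ 2 * ‖gradientStep L f' y - z‖ ^ 2 =
      L ^ 2 * ‖y - z‖ ^ 2 - 2 * (L * ⟪y - z, f' y⟫) + ‖f' y‖ ^ 2 := by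
    rw [← sq_abs L, ← Real.norm_eq_abs, ← mul_pow, ← norm_smul, hdist, norm_sub_sq_real,
      norm_smul, mul_pow, Real.norm_eq_abs, sq_abs, real_inner_smul_left]
  rw [hz, zero_sub, norm_neg, ← neg_sub, inner_neg_right, real_inner_comm] at h
  linear_combination h + hsq

def descentPotential (L : ℝ) (f : E → ℝ) (f' : E → E) (z : E) (k : ℕ) (y : E) : ℝ :=
  2 * k * L * (f y - f z) + k * (k + 1) * ‖f' y‖ ^ 2 + L ^ 2 * ‖y - z‖ ^ 2

theorem descentPotential_succ_gradientStep_le (hL : L ≠ 0)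
    (hf : SmoothConvexInterpolation L f f') {z : E} (hz : f' z = 0) (k : ℕ) (y : E) :
    descentPotential L f f' z (k + 1) (gradientStep L f' y) ≤ descentPotential L f f' z k y := by
  have hdecrease := sq_norm_add_sq_norm_gradientStep_le hL hf y
  have hnorm := sq_norm_gradientStep_le hL hf y
  have hdist := two_mul_sub_add_sq_dist_gradientStep_le hL hf hz y
  unfold descentPotential
  push_cast
  linear_combination hdist + (k + 1) * hdecrease + (k + 1) ^ 2 * hnorm

theorem two_mul_succ_mul_sub_le_descentPotential (hL : L ≠ 0)
    (hf : SmoothConvexInterpolation L f f') {z : E} (hz : f' z = 0) (k : ℕ) (y : E) :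
    2 * (k + 1) * L * (f y - f z) ≤ descentPotential L f f' z k y := by
  have hdist := two_mul_sub_add_sq_dist_gradientStep_le hL hf hz y
  have hnorm : 0 ≤ k * (k + 1) * ‖f' y‖ ^ 2 := by positivity
  have hdist' : 0 ≤ L ^ 2 * ‖gradientStep L f' y - z‖ ^ 2 := by positivity
  unfold descentPotential
  linear_combination hdist + hnorm + hdist'

theorem mul_sq_norm_le_descentPotential
    (hf : SmoothConvexInterpolation L f f') {z : E} (hz : f' z = 0) (k : ℕ) (y : E) :
    k * (k + 2) * ‖f' y‖ ^ 2 ≤ descentPotential L f f' z k y := by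
  have h := hf y z
  rw [hz, inner_zero_left, sub_zero, add_zero] at h
  have hdist : 0 ≤ L ^ 2 * ‖y - z‖ ^ 2 := by positivity
  unfold descentPotential
  linear_combination (k : ℝ) * h + hdist

end GradientDescent

/-- Simultaneous function-value and gradient-norm rates for gradient descent. -/
theorem gd_rates {d : ℕ} (L : ℝ) (hL : 0 < L)
    (f : EuclideanSpace ℝ (Fin d) → ℝ)
    (f' : EuclideanSpace ℝ (Fin d) → EuclideanSpace ℝ (Fin d))
    (hgrad : ∀ x, HasGradientAt f (f' x) x)
    (hconv : ConvexOn ℝ Set.univ f)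
    (hsmooth : ∀ x y, ‖f' x - f' y‖ ≤ L * ‖x - y‖)
    (xstar : EuclideanSpace ℝ (Fin d)) (hmin : ∀ y, f xstar ≤ f y)
    (x : ℕ → EuclideanSpace ℝ (Fin d))
    (hstep : ∀ k, x (k + 1) = x k - (1 / L) • f' (x k))
    (N : ℕ) (hN : 0 < N) :
    f (x N) - f xstar ≤ L * ‖x 0 - xstar‖ ^ 2 / (2 * (N : ℝ) + 1) ∧
    ‖f' (x N)‖ ^ 2 ≤ L ^ 2 * ‖x 0 - xstar‖ ^ 2 / ((N : ℝ) * ((N : ℝ) + 2)) := by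
  have hf := hconv.smoothConvexInterpolation hL hgrad hsmooth
  have hz : f' xstar = 0 := by
    have h := (isMinOn_univ_iff.2 hmin |>.isLocalMin Filter.univ_mem).hasFDerivAt_eq_zero
      (hgrad xstar).hasFDerivAt
    simpa using congrArg (InnerProductSpace.toDual ℝ _).symm h
  have hpot : descentPotential L f f' xstar N (x N) ≤ L ^ 2 * ‖x 0 - xstar‖ ^ 2 := by
    have hanti : Antitone fun k => descentPotential L f f' xstar k (x k) :=
      antitone_nat_of_succ_le fun k => by
        rw [hstep k]
        exact descentPotential_succ_gradientStep_le hL.ne' hf hz k (x k)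
    simpa [descentPotential] using hanti (Nat.zero_le N)
  constructor
  · have hgap : 0 ≤ f (x N) - f xstar := sub_nonneg.2 (hmin _)
    have h := (two_mul_succ_mul_sub_le_descentPotential hL.ne' hf hz N (x N)).trans hpot
    rw [le_div_iff₀ (by positivity)]
    refine le_of_mul_le_mul_left ?_ hL
    linear_combination h + L * hgap
  · have h := (mul_sq_norm_le_descentPotential hf hz N (x N)).trans hpot
    rw [le_div_iff₀ (by positivity)]
    linarith
end

section
/- For SGD with constant step-size δ_k = 1/L on an L-smooth convex function with unbiased oracle of variance ≤ σ², the iterates satisfy N · E[f(x_N) - f(x⋆)] + (L/2) E‖x_N - x⋆‖² ≤ (L/2)‖x_0 - x⋆‖² + (N(N+3)/4)(σ²/L). -/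
/-!
Let `Φ_a(y) = a (f y - f x⋆) + (L/2)‖y - x⋆‖²`. Averaged over the oracle index, one step
`y⁺ = y - G(y; i)/L` satisfies `E Φ_{k+1}(y⁺) ≤ Φ_k(y) + (k/2 + 1) σ²/L`: the descent lemma
bounds `E f(y⁺)`, the distance expands exactly, and the convexity gap
`f y - f x⋆ ≤ ⟪y - x⋆, f' y⟫` absorbs the cross term. As `x_k` depends only on the first `k`
indices, the same bound holds for `E Φ_k(x_k)`; telescoping from `Φ_0(x_0) = (L/2)‖x_0 - x⋆‖²`
and `∑_{k<N} (k/2 + 1) = N(N+3)/4` gives the claim.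
-/

open Finset RealInnerProductSpace

section Gradient

variable {E : Type*} [NormedAddCommGroup E] [InnerProductSpace ℝ E] [CompleteSpace E] {f : E → ℝ}

theorem HasGradientAt.hasDerivAt_comp_lineMap {g x y : E} {t : ℝ}
    (hf : HasGradientAt f g (AffineMap.lineMap x y t)) :
    HasDerivAt (f ∘ AffineMap.lineMap x y) ⟪g, y - x⟫ t := by
  simpa [InnerProductSpace.toDual_apply_apply] using
    hf.hasFDerivAt.comp_hasDerivAt t AffineMap.hasDerivAt_lineMap

theorem ConvexOn.add_inner_le_of_hasGradientAt {s : Set E} {g x z : E} (hconv : ConvexOn ℝ s f)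
    (hx : x ∈ s) (hz : z ∈ s) (hf : HasGradientAt f g x) :
    f x + ⟪g, z - x⟫ ≤ f z := by
  have hline := hconv.comp_affineMap (AffineMap.lineMap x z : ℝ →ᵃ[ℝ] E)
  have hderiv : HasDerivAt (f ∘ (AffineMap.lineMap x z : ℝ →ᵃ[ℝ] E)) ⟪g, z - x⟫ 0 :=
    HasGradientAt.hasDerivAt_comp_lineMap (by simpa using hf)
  have := hline.le_slope_of_hasDerivAt (by simpa using hx) (by simpa using hz) one_pos hderiv
  simp only [slope_def_field, Function.comp_apply, AffineMap.lineMap_apply_one,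
    AffineMap.lineMap_apply_zero, sub_zero, div_one] at this
  linarith

theorem le_add_inner_add_sq_of_lipschitz_gradient {f' : E → E} {L : ℝ}
    (hgrad : ∀ x, HasGradientAt f (f' x) x) (hsmooth : ∀ x y, ‖f' x - f' y‖ ≤ L * ‖x - y‖)
    (x y : E) : f y ≤ f x + ⟪f' x, y - x⟫ + L / 2 * ‖y - x‖ ^ 2 := by
  let φ : ℝ → ℝ := fun t =>
    f (AffineMap.lineMap x y t) - t * ⟪f' x, y - x⟫ - L / 2 * t ^ 2 * ‖y - x‖ ^ 2
  have hφ : ∀ t, HasDerivAt φ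
      (⟪f' (AffineMap.lineMap x y t) - f' x, y - x⟫ - L * t * ‖y - x‖ ^ 2) t := by
    intro t
    refine (((hgrad _).hasDerivAt_comp_lineMap.sub ((hasDerivAt_id t).mul_const _)).sub
      (((hasDerivAt_pow 2 t).const_mul (L / 2)).mul_const (‖y - x‖ ^ 2))).congr_deriv ?_
    rw [inner_sub_left]
    ring
  have hφ_nonpos : ∀ t ∈ interior (Set.Ici (0 : ℝ)),
      ⟪f' (AffineMap.lineMap x y t) - f' x, y - x⟫ - L * t * ‖y - x‖ ^ 2 ≤ 0 := by
    intro t ht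
    rw [interior_Ici] at ht
    have hdist : ‖AffineMap.lineMap x y t - x‖ = t * ‖y - x‖ := by
      rw [AffineMap.lineMap_apply, vadd_eq_add, add_sub_cancel_right, norm_smul, vsub_eq_sub,
        Real.norm_of_nonneg (le_of_lt ht)]
    have hinner : ⟪f' (AffineMap.lineMap x y t) - f' x, y - x⟫ ≤ L * t * ‖y - x‖ ^ 2 :=
      calc ⟪f' (AffineMap.lineMap x y t) - f' x, y - x⟫
          ≤ ‖f' (AffineMap.lineMap x y t) - f' x‖ * ‖y - x‖ := real_inner_le_norm _ _
        _ ≤ L * ‖AffineMap.lineMap x y t - x‖ * ‖y - x‖ := by gcongr; exact hsmooth _ _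
        _ = L * t * ‖y - x‖ ^ 2 := by rw [hdist]; ring
    linarith
  have hanti : AntitoneOn φ (Set.Ici 0) :=
    antitoneOn_of_hasDerivWithinAt_nonpos (convex_Ici 0)
      (fun t _ => (hφ t).continuousAt.continuousWithinAt)
      (fun t _ => (hφ t).hasDerivWithinAt) hφ_nonpos
  have := hanti Set.self_mem_Ici (Set.mem_Ici.2 zero_le_one) zero_le_one
  simp only [φ, AffineMap.lineMap_apply_zero, AffineMap.lineMap_apply_one] at this
  linarith

end Gradient

section Average

variable {E ι : Type*} [NormedAddCommGroup E] [InnerProductSpace ℝ E] [Fintype ι] [Nonempty ι]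

theorem average_norm_sq_eq_average_norm_sub_sq_add (v : ι → E) {m : E}
    (hm : (Fintype.card ι : ℝ)⁻¹ • ∑ i, v i = m) :
    (Fintype.card ι : ℝ)⁻¹ * ∑ i, ‖v i‖ ^ 2
      = (Fintype.card ι : ℝ)⁻¹ * ∑ i, ‖v i - m‖ ^ 2 + ‖m‖ ^ 2 := by
  have hn : (Fintype.card ι : ℝ) ≠ 0 := by positivity
  have hsum : ∑ i, v i = (Fintype.card ι : ℝ) • m := by rw [← hm, smul_inv_smul₀ hn]
  simp only [norm_sub_sq_real, sum_add_distrib, sum_sub_distrib, ← mul_sum, ← sum_inner, hsum,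
    real_inner_smul_left, real_inner_self_eq_norm_sq, sum_const, card_univ, nsmul_eq_mul]
  field_simp
  ring

theorem average_norm_sub_smul_sub_sq (v : ι → E) {m : E}
    (hm : (Fintype.card ι : ℝ)⁻¹ • ∑ i, v i = m) (c : ℝ) (y z : E) :
    (Fintype.card ι : ℝ)⁻¹ * ∑ i, ‖y - c • v i - z‖ ^ 2
      = ‖y - z‖ ^ 2 - 2 * c * ⟪y - z, m⟫ + c ^ 2 * ((Fintype.card ι : ℝ)⁻¹ * ∑ i, ‖v i‖ ^ 2) := by
  have hn : (Fintype.card ι : ℝ) ≠ 0 := by positivity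
  have hsum : ∑ i, v i = (Fintype.card ι : ℝ) • m := by rw [← hm, smul_inv_smul₀ hn]
  have hexpand : ∀ i,
      ‖y - c • v i - z‖ ^ 2 = ‖y - z‖ ^ 2 - 2 * c * ⟪y - z, v i⟫ + c ^ 2 * ‖v i‖ ^ 2 := by
    intro i
    rw [sub_right_comm, norm_sub_sq_real, real_inner_smul_right, norm_smul, mul_pow,
      Real.norm_eq_abs, sq_abs]
    ring
  simp only [hexpand, sum_add_distrib, sum_sub_distrib, ← mul_sum, ← inner_sum, hsum,
    real_inner_smul_right, sum_const, card_univ, nsmul_eq_mul]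
  field_simp

end Average

section SGDStep

variable {E ι : Type*} [NormedAddCommGroup E] [InnerProductSpace ℝ E] [CompleteSpace E]
  [Fintype ι] [Nonempty ι] {f : E → ℝ} {f' : E → E} {L : ℝ}

theorem average_comp_sub_inv_smul_le (hL : 0 < L) (hgrad : ∀ x, HasGradientAt f (f' x) x)
    (hsmooth : ∀ x y, ‖f' x - f' y‖ ≤ L * ‖x - y‖) (v : ι → E) (y : E)
    (hmean : (Fintype.card ι : ℝ)⁻¹ • ∑ i, v i = f' y) :
    (Fintype.card ι : ℝ)⁻¹ * ∑ i, f (y - L⁻¹ • v i)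
      ≤ f y - L⁻¹ * ‖f' y‖ ^ 2 + L⁻¹ / 2 * ((Fintype.card ι : ℝ)⁻¹ * ∑ i, ‖v i‖ ^ 2) := by
  have hn : (Fintype.card ι : ℝ) ≠ 0 := by positivity
  have hsum : ∑ i, v i = (Fintype.card ι : ℝ) • f' y := by rw [← hmean, smul_inv_smul₀ hn]
  have hstep : ∀ i, f (y - L⁻¹ • v i) ≤ f y - L⁻¹ * ⟪f' y, v i⟫ + L⁻¹ / 2 * ‖v i‖ ^ 2 := by
    intro i
    have := le_add_inner_add_sq_of_lipschitz_gradient hgrad hsmooth y (y - L⁻¹ • v i)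
    rw [sub_sub_cancel_left, inner_neg_right, real_inner_smul_right, norm_neg, norm_smul,
      mul_pow, Real.norm_of_nonneg (inv_nonneg.2 hL.le)] at this
    refine this.trans_eq ?_
    field_simp
    ring
  calc (Fintype.card ι : ℝ)⁻¹ * ∑ i, f (y - L⁻¹ • v i)
      ≤ (Fintype.card ι : ℝ)⁻¹ * ∑ i, (f y - L⁻¹ * ⟪f' y, v i⟫ + L⁻¹ / 2 * ‖v i‖ ^ 2) := by
        gcongr with i; exact hstep i
    _ = _ := by
        simp only [sum_add_distrib, sum_sub_distrib, ← mul_sum, ← inner_sum, hsum,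
          real_inner_smul_right, real_inner_self_eq_norm_sq, sum_const, card_univ, nsmul_eq_mul]
        field_simp

noncomputable def sgdPotential (f : E → ℝ) (L : ℝ) (xstar : E) (a : ℝ) (y : E) : ℝ :=
  a * (f y - f xstar) + L / 2 * ‖y - xstar‖ ^ 2

theorem average_sgdPotential_step_le {σ : ℝ} (hL : 0 < L) (hgrad : ∀ x, HasGradientAt f (f' x) x)
    (hconv : ConvexOn ℝ Set.univ f) (hsmooth : ∀ x y, ‖f' x - f' y‖ ≤ L * ‖x - y‖) (xstar : E)
    (v : ι → E) (y : E) (hmean : (Fintype.card ι : ℝ)⁻¹ • ∑ i, v i = f' y)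
    (hvar : (Fintype.card ι : ℝ)⁻¹ * ∑ i, ‖v i - f' y‖ ^ 2 ≤ σ ^ 2) {k : ℝ} (hk : 0 ≤ k) :
    (Fintype.card ι : ℝ)⁻¹ * ∑ i, sgdPotential f L xstar (k + 1) (y - L⁻¹ • v i)
      ≤ sgdPotential f L xstar k y + (k / 2 + 1) * (σ ^ 2 / L) := by
  have hsecond := average_norm_sq_eq_average_norm_sub_sq_add v hmean
  set V := (Fintype.card ι : ℝ)⁻¹ * ∑ i, ‖v i - f' y‖ ^ 2
  have hdescent := hsecond ▸ average_comp_sub_inv_smul_le hL hgrad hsmooth v y hmean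
  have hdist : L / 2 * ((Fintype.card ι : ℝ)⁻¹ * ∑ i, ‖y - L⁻¹ • v i - xstar‖ ^ 2)
      = L / 2 * ‖y - xstar‖ ^ 2 - ⟪y - xstar, f' y⟫ + L⁻¹ / 2 * (V + ‖f' y‖ ^ 2) := by
    rw [average_norm_sub_smul_sub_sq v hmean L⁻¹ y xstar, hsecond]
    field_simp
  have hgap : f y - f xstar ≤ ⟪y - xstar, f' y⟫ := by
    have := hconv.add_inner_le_of_hasGradientAt (Set.mem_univ y) (Set.mem_univ xstar) (hgrad y)
    rw [← neg_sub, inner_neg_right, real_inner_comm] at this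
    linarith
  have hexpand : (Fintype.card ι : ℝ)⁻¹ * ∑ i, sgdPotential f L xstar (k + 1) (y - L⁻¹ • v i)
      = (k + 1) * ((Fintype.card ι : ℝ)⁻¹ * ∑ i, f (y - L⁻¹ • v i) - f xstar)
        + L / 2 * ((Fintype.card ι : ℝ)⁻¹ * ∑ i, ‖y - L⁻¹ • v i - xstar‖ ^ 2) := by
    simp only [sgdPotential, sum_add_distrib, sum_sub_distrib, ← mul_sum, sum_const, card_univ,
      nsmul_eq_mul]
    field_simp
  rw [hexpand, hdist, sgdPotential, div_eq_mul_inv (σ ^ 2)]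
  -- the value drop `(k + 1) ‖f' y‖² / L` outweighs the `(k + 2) ‖f' y‖² / (2L)` that the
  -- second moments cost, leaving only the variance
  linarith [mul_le_mul_of_nonneg_left hdescent (by positivity : (0 : ℝ) ≤ k + 1),
    mul_le_mul_of_nonneg_left hvar (by positivity : (0 : ℝ) ≤ (k / 2 + 1) * L⁻¹),
    (by positivity : (0 : ℝ) ≤ k * L⁻¹ * ‖f' y‖ ^ 2)]

end SGDStep

theorem sum_sum_update_eq_card_smul_sum {ι α M : Type*} [DecidableEq ι] [Fintype ι] [Fintype α]
    [AddCommMonoid M] (g : (ι → α) → M) (k : ι) :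
    ∑ ω, ∑ j, g (Function.update ω k j) = Fintype.card α • ∑ ω, g ω := by
  let e : Equiv.Perm ((ι → α) × α) :=
    Function.Involutive.toPerm (fun p => (Function.update p.1 k p.2, p.1 k)) fun p => by simp
  calc ∑ ω, ∑ j, g (Function.update ω k j) = ∑ p, g (e p).1 := by
        rw [Fintype.sum_prod_type]; rfl
    _ = ∑ p : (ι → α) × α, g p.1 := Equiv.sum_comp e fun p => g p.1
    _ = Fintype.card α • ∑ ω, g ω := by
        simp [Fintype.sum_prod_type, smul_sum]

section Iterates

variable {α E : Type*} {N : ℕ} {T : E → α → E} {x : (Fin N → α) → ℕ → E} {x0 : E}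

theorem apply_update_eq_of_le (hx0 : ∀ ω, x ω 0 = x0)
    (hstep : ∀ ω (k : Fin N), x ω (k + 1) = T (x ω k) (ω k))
    (ω : Fin N → α) (i : Fin N) (j : α) {k : ℕ} (hk : k ≤ i) :
    x (Function.update ω i j) k = x ω k := by
  induction k with
  | zero => rw [hx0, hx0]
  | succ k ih =>
    have hki : k < (i : ℕ) := hk
    rw [hstep _ ⟨k, hki.trans i.isLt⟩, hstep ω ⟨k, hki.trans i.isLt⟩, ih hki.le,
      Function.update_of_ne (Fin.ne_of_val_ne hki.ne)]

theorem sum_succ_le_sum_of_average_le [Fintype α] [Nonempty α] (hx0 : ∀ ω, x ω 0 = x0)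
    (hstep : ∀ ω (k : Fin N), x ω (k + 1) = T (x ω k) (ω k)) {Φ Ψ : E → ℝ}
    (hΨ : ∀ y, (Fintype.card α : ℝ)⁻¹ * ∑ j, Ψ (T y j) ≤ Φ y) (k : Fin N) :
    ∑ ω, Ψ (x ω (k + 1)) ≤ ∑ ω, Φ (x ω k) := by
  have hresample : ∀ ω j, x (Function.update ω k j) (k + 1) = T (x ω k) j := fun ω j => by
    rw [hstep, apply_update_eq_of_le hx0 hstep ω k j le_rfl, Function.update_self]
  have hcard : (0 : ℝ) < Fintype.card α := by exact_mod_cast Fintype.card_pos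
  rw [← mul_le_mul_iff_right₀ hcard, ← nsmul_eq_mul,
    ← sum_sum_update_eq_card_smul_sum (fun ω => Ψ (x ω (k + 1))) k, mul_sum]
  refine sum_le_sum fun ω _ => ?_
  simp only [hresample]
  rw [← inv_mul_le_iff₀ hcard]
  exact hΨ _

end Iterates

theorem sum_range_half_add_one (N : ℕ) :
    ∑ k ∈ range N, ((k : ℝ) / 2 + 1) = (N : ℝ) * ((N : ℝ) + 3) / 4 := by
  induction N with
  | zero => simp
  | succ N ih =>
    rw [sum_range_succ, ih]
    push_cast
    ring

theorem sgd_unit_step_telescoped_general {d n N : ℕ} (hn : 0 < n) (L σ : ℝ) (hL : 0 < L)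
    (f : EuclideanSpace ℝ (Fin d) → ℝ)
    (f' : EuclideanSpace ℝ (Fin d) → EuclideanSpace ℝ (Fin d))
    (hgrad : ∀ x, HasGradientAt f (f' x) x)
    (hconv : ConvexOn ℝ Set.univ f)
    (hsmooth : ∀ x y, ‖f' x - f' y‖ ≤ L * ‖x - y‖)
    (xstar : EuclideanSpace ℝ (Fin d))
    (G : EuclideanSpace ℝ (Fin d) → Fin n → EuclideanSpace ℝ (Fin d))
    (hunbiased : ∀ y, (n : ℝ)⁻¹ • (∑ i, G y i) = f' y)
    (hvar : ∀ y, (n : ℝ)⁻¹ * (∑ i, ‖G y i - f' y‖ ^ 2) ≤ σ ^ 2)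
    (x0 : EuclideanSpace ℝ (Fin d))
    (x : (Fin N → Fin n) → ℕ → EuclideanSpace ℝ (Fin d))
    (hx0 : ∀ ω, x ω 0 = x0)
    (hstep : ∀ ω (k : Fin N),
      x ω (k.val + 1) = x ω k.val - (1 / L) • G (x ω k.val) (ω k)) :
    (N : ℝ) * (((n : ℝ) ^ N)⁻¹ * ∑ ω : Fin N → Fin n, (f (x ω N) - f xstar))
      + L / 2 * (((n : ℝ) ^ N)⁻¹ * ∑ ω : Fin N → Fin n, ‖x ω N - xstar‖ ^ 2)
    ≤ L / 2 * ‖x0 - xstar‖ ^ 2 + (N : ℝ) * ((N : ℝ) + 3) / 4 * (σ ^ 2 / L) := by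
  have : Nonempty (Fin n) := ⟨⟨0, hn⟩⟩
  simp only [one_div] at hstep
  have hcard : (Fintype.card (Fin N → Fin n) : ℝ) = (n : ℝ) ^ N := by simp
  let a : ℕ → ℝ := fun k => ((n : ℝ) ^ N)⁻¹ * ∑ ω, sgdPotential f L xstar k (x ω k)
  have hdrift : ∀ k ∈ range N, a (k + 1) - a k ≤ ((k : ℝ) / 2 + 1) * (σ ^ 2 / L) := by
    intro k hk
    have := sum_succ_le_sum_of_average_le hx0 hstep (fun y =>
      average_sgdPotential_step_le hL hgrad hconv hsmooth xstar (G y) y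
        (by simpa using hunbiased y) (by simpa using hvar y) k.cast_nonneg) ⟨k, mem_range.1 hk⟩
    rw [sum_add_distrib, sum_const, card_univ, nsmul_eq_mul, hcard] at this
    simp only [a, ← mul_sub, Nat.cast_succ]
    rw [inv_mul_le_iff₀ (by positivity)]
    linarith
  have htelescope := sum_range_sub a N ▸ sum_le_sum hdrift
  rw [← sum_mul, sum_range_half_add_one] at htelescope
  have ha0 : a 0 = L / 2 * ‖x0 - xstar‖ ^ 2 := by
    have hpow : ((n : ℝ) ^ N) ≠ 0 := by positivity
    simp [a, sgdPotential, hx0, inv_mul_cancel_left₀ hpow]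
  have haN : (N : ℝ) * (((n : ℝ) ^ N)⁻¹ * ∑ ω : Fin N → Fin n, (f (x ω N) - f xstar))
      + L / 2 * (((n : ℝ) ^ N)⁻¹ * ∑ ω : Fin N → Fin n, ‖x ω N - xstar‖ ^ 2) = a N := by
    simp only [a, sgdPotential, sum_add_distrib, ← mul_sum]
    ring
  linarith

/-- Telescoped bound for SGD with constant step-size 1/L: the expectation is
over all sequences of indices `ω : Fin N → Fin n`, each drawn uniformly. -/
theorem sgd_unit_step_telescoped {d n N : ℕ} (hn : 0 < n) (L σ : ℝ) (hL : 0 < L)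
    (f : EuclideanSpace ℝ (Fin d) → ℝ)
    (f' : EuclideanSpace ℝ (Fin d) → EuclideanSpace ℝ (Fin d))
    (hgrad : ∀ x, HasGradientAt f (f' x) x)
    (hconv : ConvexOn ℝ Set.univ f)
    (hsmooth : ∀ x y, ‖f' x - f' y‖ ≤ L * ‖x - y‖)
    (xstar : EuclideanSpace ℝ (Fin d)) (hmin : ∀ y, f xstar ≤ f y)
    (G : EuclideanSpace ℝ (Fin d) → Fin n → EuclideanSpace ℝ (Fin d))
    (hunbiased : ∀ y, (n : ℝ)⁻¹ • (∑ i, G y i) = f' y)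
    (hvar : ∀ y, (n : ℝ)⁻¹ * (∑ i, ‖G y i - f' y‖ ^ 2) ≤ σ ^ 2)
    (x0 : EuclideanSpace ℝ (Fin d))
    (x : (Fin N → Fin n) → ℕ → EuclideanSpace ℝ (Fin d))
    (hx0 : ∀ ω, x ω 0 = x0)
    (hstep : ∀ ω (k : Fin N),
      x ω (k.val + 1) = x ω k.val - (1 / L) • G (x ω k.val) (ω k)) :
    (N : ℝ) * (((n : ℝ) ^ N)⁻¹ * ∑ ω : Fin N → Fin n, (f (x ω N) - f xstar))
      + L / 2 * (((n : ℝ) ^ N)⁻¹ * ∑ ω : Fin N → Fin n, ‖x ω N - xstar‖ ^ 2)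
    ≤ L / 2 * ‖x0 - xstar‖ ^ 2 + (N : ℝ) * ((N : ℝ) + 3) / 4 * (σ ^ 2 / L) :=
  sgd_unit_step_telescoped_general hn L σ hL f f' hgrad hconv hsmooth xstar G hunbiased hvar x0 x
    hx0 hstep
end

section
/- Let f be L-smooth convex and let G be an unbiased stochastic oracle satisfying the weak growth condition E_i‖G(x;i)‖² ≤ 2ρL(f(x) - f⋆) for all x, with ρ ≥ 1. For the primal averaging scheme y_{k+1} = (d_k/(d_k + δ_k L)) y_k + (δ_k L/(d_k + δ_k L)) x_k, x_{k+1} = x_k - δ_k G(y_{k+1}; i_k), with d_{k+1} = d_k + δ_k L - ρ δ_k² L², one has d_{k+1}(f(y_{k+1}) - f⋆) + (L/2) E_{i_k}‖x_{k+1} - x⋆‖² ≤ d_k (f(y_k) - f⋆) + (L/2)‖x_k - x⋆‖². -/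
/-!
Write `g = ∇f(y₁)`. Averaging over `i` gives
`E‖x₁ - x⋆‖² = ‖x_k - x⋆‖² - 2δ⟪g, x_k - x⋆⟫ + δ² E‖G(y₁; i)‖²`, and weak growth bounds the last
term by `2ρL δ² (f(y₁) - f⋆)`, which cancels the `-ρδ²L²` in `d_{k+1}`. Since `y₁` is the
`d_k : δL` weighted mean of `y_k` and `x_k`, `d_k (y_k - y₁) + δL (x_k - y₁) = 0`; splitting
`x_k - x⋆ = (x_k - y₁) - (x⋆ - y₁)` then leaves the two gradient inequalities
`f(y₁) + ⟪g, y_k - y₁⟫ ≤ f(y_k)` and `f(y₁) + ⟪g, x⋆ - y₁⟫ ≤ f(x⋆)`, weighted by `d_k` and `δL`.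
-/

open Finset

section

variable {E : Type*} [NormedAddCommGroup E] [InnerProductSpace ℝ E]

theorem ConvexOn.add_inner_sub_le_of_hasGradientAt [CompleteSpace E] {f : E → ℝ}
    (hf : ConvexOn ℝ Set.univ f) {x g : E} (hg : HasGradientAt f g x) (y : E) :
    f x + inner ℝ g (y - x) ≤ f y := by
  let ℓ : ℝ →ᵃ[ℝ] E := AffineMap.lineMap x y
  have hline : ConvexOn ℝ Set.univ (f ∘ ℓ) := by simpa using hf.comp_affineMap ℓ
  have hderiv : HasDerivAt (f ∘ ℓ) (inner ℝ g (y - x)) 0 := by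
    have hg' : HasFDerivAt f (InnerProductSpace.toDual ℝ E g) (ℓ 0) := by
      simpa [ℓ] using hg.hasFDerivAt
    simpa using hg'.comp_hasDerivAt 0 AffineMap.hasDerivAt_lineMap
  have := hline.le_slope_of_hasDerivAt (Set.mem_univ 0) (Set.mem_univ 1) one_pos hderiv
  simp only [slope_def_field, Function.comp_apply, AffineMap.lineMap_apply_one,
    AffineMap.lineMap_apply_zero, sub_zero, div_one, ℓ] at this
  linarith

theorem inv_card_mul_sum_norm_sub_smul_sq {ι : Type*} [Fintype ι] [Nonempty ι] (a : E) (δ : ℝ)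
    (v : ι → E) :
    (Fintype.card ι : ℝ)⁻¹ * ∑ i, ‖a - δ • v i‖ ^ 2
      = ‖a‖ ^ 2 - 2 * δ * inner ℝ ((Fintype.card ι : ℝ)⁻¹ • ∑ i, v i) a
        + δ ^ 2 * ((Fintype.card ι : ℝ)⁻¹ * ∑ i, ‖v i‖ ^ 2) := by
  have hcard : (Fintype.card ι : ℝ) ≠ 0 := by positivity
  simp only [norm_sub_sq_real, norm_smul, real_inner_smul_right, inner_sum,
    sum_add_distrib, sum_sub_distrib, ← mul_sum, sum_const, card_univ, nsmul_eq_mul,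
    mul_pow, Real.norm_eq_abs, sq_abs, real_inner_comm a]
  field_simp

theorem smul_sub_add_smul_sub_eq_zero {𝕜 V : Type*} [Field 𝕜] [LinearOrder 𝕜]
    [IsStrictOrderedRing 𝕜] [AddCommGroup V] [Module 𝕜 V] {a b : 𝕜}
    (ha : 0 ≤ a) (hb : 0 ≤ b) {u v w : V} (hw : w = (a / (a + b)) • u + (b / (a + b)) • v) :
    a • (u - w) + b • (v - w) = 0 := by
  rcases (add_nonneg ha hb).eq_or_lt with hab | hab
  · obtain ⟨rfl, rfl⟩ : a = 0 ∧ b = 0 := ⟨by linarith, by linarith⟩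
    simp
  · have hw' : (a + b) • w = a • u + b • v := by
      rw [hw, smul_add, smul_smul, smul_smul, mul_div_cancel₀ _ hab.ne', mul_div_cancel₀ _ hab.ne']
    rw [smul_sub, smul_sub, sub_add_sub_comm, ← add_smul, hw', sub_self]

end

theorem weak_growth_primal_averaging_potential_general {d n : ℕ} (hn : 0 < n)
    (L ρ : ℝ) (hL : 0 < L)
    (f : EuclideanSpace ℝ (Fin d) → ℝ)
    (f' : EuclideanSpace ℝ (Fin d) → EuclideanSpace ℝ (Fin d))
    (hgrad : ∀ x, HasGradientAt f (f' x) x)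
    (hconv : ConvexOn ℝ Set.univ f)
    (xstar : EuclideanSpace ℝ (Fin d))
    (G : EuclideanSpace ℝ (Fin d) → Fin n → EuclideanSpace ℝ (Fin d))
    (hunbiased : ∀ x, (n : ℝ)⁻¹ • (∑ i, G x i) = f' x)
    (hwg : ∀ x, (n : ℝ)⁻¹ * (∑ i, ‖G x i‖ ^ 2) ≤ 2 * ρ * L * (f x - f xstar))
    (δ dk : ℝ) (hδ : 0 ≤ δ) (hdk : 0 ≤ dk)
    (xk yk y1 : EuclideanSpace ℝ (Fin d))
    (hy1 : y1 = (dk / (dk + δ * L)) • yk + (δ * L / (dk + δ * L)) • xk)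
    (x1 : Fin n → EuclideanSpace ℝ (Fin d))
    (hx1 : ∀ i, x1 i = xk - δ • G y1 i) :
    (dk + δ * L - ρ * δ ^ 2 * L ^ 2) * (f y1 - f xstar)
        + L / 2 * ((n : ℝ)⁻¹ * ∑ i, ‖x1 i - xstar‖ ^ 2)
      ≤ dk * (f yk - f xstar) + L / 2 * ‖xk - xstar‖ ^ 2 := by
  have : Nonempty (Fin n) := ⟨⟨0, hn⟩⟩
  set g := f' y1
  have hdist : (n : ℝ)⁻¹ * ∑ i, ‖x1 i - xstar‖ ^ 2
      = ‖xk - xstar‖ ^ 2 - 2 * δ * inner ℝ g (xk - xstar)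
        + δ ^ 2 * ((n : ℝ)⁻¹ * ∑ i, ‖G y1 i‖ ^ 2) := by
    have := inv_card_mul_sum_norm_sub_smul_sq (xk - xstar) δ (G y1)
    simp only [Fintype.card_fin, hunbiased] at this
    simpa only [hx1, sub_right_comm xk] using this
  have hbalance : dk * inner ℝ g (yk - y1) + δ * L * inner ℝ g (xk - y1) = 0 := by
    simpa [inner_add_right, real_inner_smul_right] using
      congrArg (inner ℝ g) (smul_sub_add_smul_sub_eq_zero hdk (mul_nonneg hδ hL.le) hy1)
  have hyk := hconv.add_inner_sub_le_of_hasGradientAt (hgrad y1) yk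
  have hxstar := hconv.add_inner_sub_le_of_hasGradientAt (hgrad y1) xstar
  have hsplit : inner ℝ g (xk - xstar) = inner ℝ g (xk - y1) - inner ℝ g (xstar - y1) := by
    rw [← inner_sub_right, sub_sub_sub_cancel_right]
  have hvar := mul_le_mul_of_nonneg_left (hwg y1) (by positivity : 0 ≤ L / 2 * δ ^ 2)
  rw [hdist, hsplit]
  linarith [mul_le_mul_of_nonneg_left hyk hdk,
    mul_le_mul_of_nonneg_left hxstar (mul_nonneg hδ hL.le)]

/-- One-step potential inequality for primal-averaging SGD under the weak
growth condition `E_i ‖G(x;i)‖² ≤ 2ρL (f(x) - f⋆)`. -/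
theorem weak_growth_primal_averaging_potential {d n : ℕ} (hn : 0 < n)
    (L ρ : ℝ) (hL : 0 < L) (hρ : 1 ≤ ρ)
    (f : EuclideanSpace ℝ (Fin d) → ℝ)
    (f' : EuclideanSpace ℝ (Fin d) → EuclideanSpace ℝ (Fin d))
    (hgrad : ∀ x, HasGradientAt f (f' x) x)
    (hconv : ConvexOn ℝ Set.univ f)
    (hsmooth : ∀ x y, ‖f' x - f' y‖ ≤ L * ‖x - y‖)
    (xstar : EuclideanSpace ℝ (Fin d)) (hmin : ∀ y, f xstar ≤ f y)
    (G : EuclideanSpace ℝ (Fin d) → Fin n → EuclideanSpace ℝ (Fin d))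
    (hunbiased : ∀ x, (n : ℝ)⁻¹ • (∑ i, G x i) = f' x)
    (hwg : ∀ x, (n : ℝ)⁻¹ * (∑ i, ‖G x i‖ ^ 2) ≤ 2 * ρ * L * (f x - f xstar))
    (δ dk : ℝ) (hδ : 0 ≤ δ) (hdk : 0 ≤ dk)
    (xk yk y1 : EuclideanSpace ℝ (Fin d))
    (hy1 : y1 = (dk / (dk + δ * L)) • yk + (δ * L / (dk + δ * L)) • xk)
    (x1 : Fin n → EuclideanSpace ℝ (Fin d))
    (hx1 : ∀ i, x1 i = xk - δ • G y1 i) :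
    (dk + δ * L - ρ * δ ^ 2 * L ^ 2) * (f y1 - f xstar)
        + L / 2 * ((n : ℝ)⁻¹ * ∑ i, ‖x1 i - xstar‖ ^ 2)
      ≤ dk * (f yk - f xstar) + L / 2 * ‖xk - xstar‖ ^ 2 :=
  weak_growth_primal_averaging_potential_general hn L ρ hL f f' hgrad hconv xstar G hunbiased hwg δ
    dk hδ hdk xk yk y1 hy1 x1 hx1
end
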